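/- arXiv:1911.06572 — 2 statements merged into one kernel-verified Lean document; each statement's English description precedes it below -/
import Mathlib

section
/- Let X be a compact hyper-Kähler manifold of complex dimension 2m and let G be a group acting on the rational cohomology ring H*(X, ℚ) by graded algebra automorphisms. If G acts trivially on H²(X, ℚ), then the G-action commutes with the action of the Looijenga–Lunts–Verbitsky Lie algebra g_LLV(X) ⊆ gl(H*(X, ℚ)). -/
/-!
Conjugation by `ρ g` is a Lie algebra automorphism of `End(V)`. It fixes `θ` because `ρ g`
preserves degrees, and fixes every `L_x` with `x ∈ H²` because `ρ g` is multiplicative and fixes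
`x`; so it carries an `sl₂`-triple `(θ, L_x, Λ)` to `(θ, L_x, ρ g ∘ Λ ∘ (ρ g)⁻¹)`. The last member
of such a triple is unique: the difference `d` of two candidates is a primitive vector of weight
`-2` for the adjoint action, `(ad Λ)ⁿ d` has `ad θ`-weight `-2 - 2n`, which for large `n` is not a
difference of eigenvalues of `θ`, so `(ad Λ)ⁿ d = 0`; but a primitive vector killed by a power of
`ad Λ` has weight in `ℕ`. Hence `ρ g` commutes with all generators of `g_LLV`, and so with all of it.
-/

universe u

open Module
open scoped Pointwise

attribute [local instance 100] LieRing.ofAssociativeRing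

namespace IsSl2Triple

variable {R L L' M : Type*} [CommRing R] [LieRing L] [LieAlgebra R L] [LieRing L']
  [LieAlgebra R L'] [AddCommGroup M] [Module R M] [LieRingModule L M] [LieModule R L M]
  {h e f : L}

lemma map (t : IsSl2Triple h e f) (φ : L ≃ₗ⁅R⁆ L') : IsSl2Triple (φ h) (φ e) (φ f) where
  h_ne_zero := by simpa using t.h_ne_zero
  lie_e_f := by rw [← LieEquiv.map_lie, t.lie_e_f]
  lie_h_e_nsmul := by rw [← LieEquiv.map_lie, t.lie_h_e_nsmul, map_nsmul]
  lie_h_f_nsmul := by rw [← LieEquiv.map_lie, t.lie_h_f_nsmul, map_neg, map_nsmul]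

lemma HasPrimitiveVectorWith.exists_nat_of_pow_toEnd_f_eq_zero [IsDomain R] [CharZero R]
    [IsTorsionFree R M] {t : IsSl2Triple h e f} {m : M} {μ : R}
    (P : t.HasPrimitiveVectorWith m μ) {n : ℕ} (hn : (LieModule.toEnd R L M f ^ n) m = 0) :
    ∃ k : ℕ, μ = k := by
  obtain ⟨k, hk, hk_succ⟩ := Nat.exists_not_and_succ_of_not_zero_of_exists
    (p := fun k ↦ (LieModule.toEnd R L M f ^ k) m = 0) (by simpa using P.ne_zero) ⟨n, hn⟩
  refine ⟨k, ?_⟩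
  have := P.lie_e_pow_succ_toEnd_f k
  rw [hk_succ, lie_zero, eq_comm, smul_eq_zero_iff_left hk, mul_eq_zero, sub_eq_zero] at this
  exact this.resolve_left (Nat.cast_add_one_ne_zero k)

end IsSl2Triple

namespace Module.End

lemma eq_zero_of_lie_eq_smul {K V : Type*} [Field K] [AddCommGroup V] [Module K V]
    {θ φ : End K V} {s : Set K} (hθ : ⨆ μ ∈ s, θ.eigenspace μ = ⊤) {c : K}
    (hφ : ⁅θ, φ⁆ = c • φ) (hc : c ∉ s - s) : φ = 0 := by
  have hmaps : ∀ μ, ∀ v ∈ θ.eigenspace μ, φ v ∈ θ.eigenspace (μ + c) := by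
    intro μ v hv
    rw [mem_eigenspace_iff] at hv ⊢
    have := LinearMap.congr_fun hφ v
    rw [Ring.lie_def, LinearMap.sub_apply, mul_apply, mul_apply, hv, map_smul,
      LinearMap.smul_apply, sub_eq_iff_eq_add] at this
    rw [this, add_smul, add_comm]
  have hvanish : ∀ μ ∈ s, θ.eigenspace μ ≤ LinearMap.ker φ := by
    intro μ hμ v hv
    have hle : ⊤ ≤ ⨆ ν, ⨆ (_ : ν ≠ μ + c), θ.eigenspace ν := hθ ▸ biSup_mono
      fun ν hν hνμ ↦ hc ⟨μ + c, hνμ ▸ hν, μ, hμ, add_sub_cancel_left μ c⟩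
    exact Submodule.disjoint_def.mp (eigenspaces_iSupIndep θ (μ + c)) _ (hmaps μ v hv)
      (hle Submodule.mem_top)
  rw [← LinearMap.ker_eq_top, eq_top_iff, ← hθ]
  exact iSup₂_le hvanish

variable {R V ι : Type*} [CommRing R] [AddCommGroup V] [Module R V] {p : ι → Submodule R V}
  {θ : End R V} {a : ι → R}

lemma iSup_eigenspace_image_eq_top (hp : ⨆ i, p i = ⊤)
    (hθ : ∀ i, ∀ v ∈ p i, θ v = a i • v) {S : Set ι} (hS : ∀ i ∉ S, p i = ⊥) :
    ⨆ μ ∈ a '' S, θ.eigenspace μ = ⊤ := by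
  rw [eq_top_iff, ← hp]
  refine iSup_le fun i ↦ ?_
  by_cases hi : i ∈ S
  · exact (show p i ≤ θ.eigenspace (a i) from
      fun v hv ↦ mem_eigenspace_iff.mpr (hθ i v hv)).trans
      (le_biSup (fun μ ↦ θ.eigenspace μ) (Set.mem_image_of_mem a hi))
  · simp [hS i hi]

lemma commute_of_eq_smul_of_mapsTo (hp : ⨆ i, p i = ⊤)
    (hθ : ∀ i, ∀ v ∈ p i, θ v = a i • v) {ψ : End R V} (hψ : ∀ i, ∀ v ∈ p i, ψ v ∈ p i) :
    Commute ψ θ := by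
  rw [commute_iff_eq, ← LinearMap.eqLocus_eq_top, eq_top_iff, ← hp]
  exact iSup_le fun i v hv ↦ by
    simp [LinearMap.mem_eqLocus, hθ i v hv, hθ i _ (hψ i v hv)]

end Module.End

lemma LinearEquiv.conj_eq_self_iff_commute {R V : Type*} [CommSemiring R] [AddCommMonoid V]
    [Module R V] (ψ : V ≃ₗ[R] V) (x : End R V) : ψ.conj x = x ↔ Commute (ψ : End R V) x := by
  simp only [commute_iff_eq, LinearMap.ext_iff, conj_apply_apply, Module.End.mul_apply, coe_coe]
  refine ⟨fun h v ↦ ?_, fun h v ↦ ?_⟩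
  · simpa using h (ψ v)
  · rw [h, apply_symm_apply]

namespace IsSl2Triple

variable {K V : Type*} [Field K] [CharZero K] [AddCommGroup V] [Module K V]
  {θ e f : End K V} {s : Set K}

lemma f_eq_of_iSup_eigenspace_eq_top {f' : End K V} (hs : s.Finite)
    (hθ : ⨆ μ ∈ s, θ.eigenspace μ = ⊤) (t : IsSl2Triple θ e f) (t' : IsSl2Triple θ e f') :
    f' = f := by
  by_contra hne
  have P : t.HasPrimitiveVectorWith (f' - f) (-2 : K) :=
    { ne_zero := sub_ne_zero.mpr hne
      lie_h := by rw [lie_sub, t'.lie_h_f_nsmul, t.lie_h_f_nsmul]; module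
      lie_e := by rw [lie_sub, t'.lie_e_f, t.lie_e_f, sub_self] }
  have hweight_inj : Function.Injective fun n : ℕ ↦ (-2 - 2 * n : K) :=
    fun a b hab ↦ by simpa using hab
  obtain ⟨n, hn⟩ := ((hs.sub hs).preimage hweight_inj.injOn).exists_notMem
  obtain ⟨k, hk⟩ := P.exists_nat_of_pow_toEnd_f_eq_zero
    (Module.End.eq_zero_of_lie_eq_smul hθ (P.lie_h_pow_toEnd_f n) hn)
  exact Nat.cast_add_one_ne_zero (k + 1) (by push_cast; linear_combination -hk)

lemma commute_f_of_commute (hs : s.Finite)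
    (hθ : ⨆ μ ∈ s, θ.eigenspace μ = ⊤) (t : IsSl2Triple θ e f) (ψ : V ≃ₗ[K] V)
    (hψθ : Commute (ψ : End K V) θ) (hψe : Commute (ψ : End K V) e) :
    Commute (ψ : End K V) f := by
  have t' := t.map ψ.lieConj
  simp only [LinearEquiv.lieConj_apply, (ψ.conj_eq_self_iff_commute _).mpr, hψθ, hψe] at t'
  exact (ψ.conj_eq_self_iff_commute f).mp (t.f_eq_of_iSup_eigenspace_eq_top hs hθ t')

end IsSl2Triple

theorem group_action_commutes_with_LLV_lieAlgebra_general
    (V : Type u) [Ring V] [Algebra ℚ V]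
    (m : ℕ) (gr : ℕ → Submodule ℚ V)
    -- `V` is the graded algebra `H*(X, ℚ)` of a `2m`-dimensional compact hyper-Kähler `X`:
    (hgr_top : ⨆ k, gr k = ⊤)
    (hgr_bounded : ∀ k : ℕ, 4 * m < k → gr k = ⊥)
    -- the degree operator `θ`:
    (θ : Module.End ℚ V)
    (hθ : ∀ (k : ℕ), ∀ v ∈ gr k, θ v = ((k : ℚ) - 2 * m) • v)
    -- the group action by graded algebra automorphisms:
    (G : Type u) [Group G] (ρ : G →* (V ≃ₐ[ℚ] V))
    (hgraded : ∀ (g : G) (k : ℕ), ∀ v ∈ gr k, ρ g v ∈ gr k)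
    -- the action is trivial on `H²(X, ℚ)`:
    (htriv : ∀ (g : G), ∀ v ∈ gr 2, ρ g v = v) :
    ∀ (g : G),
      ∀ φ ∈ LieSubalgebra.lieSpan ℚ (Module.End ℚ V)
        {f : Module.End ℚ V |
          ∃ x ∈ gr 2, ∃ Λ : Module.End ℚ V,
            IsSl2Triple θ (LinearMap.mulLeft ℚ x) Λ ∧
              (f = LinearMap.mulLeft ℚ x ∨ f = θ ∨ f = Λ)},
      ∀ v : V, ρ g (φ v) = φ (ρ g v) := by
  intro g φ hφ v
  set ψ : V ≃ₗ[ℚ] V := (ρ g).toLinearEquiv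
  have hspec := Module.End.iSup_eigenspace_image_eq_top hgr_top hθ
    (S := Set.Iic (4 * m)) fun k hk ↦ hgr_bounded k (not_le.mp hk)
  have hψθ : Commute (ψ : End ℚ V) θ :=
    Module.End.commute_of_eq_smul_of_mapsTo hgr_top hθ (hgraded g)
  have hψL : ∀ x ∈ gr 2, Commute (ψ : End ℚ V) (LinearMap.mulLeft ℚ x) := fun x hx ↦
    LinearMap.ext fun v ↦ by simp [ψ, htriv g x hx]
  suffices hφψ : φ ∈ lieSubalgebraOfSubalgebra ℚ _ (Subalgebra.centralizer ℚ {(ψ : End ℚ V)}) from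
    LinearMap.congr_fun ((Subalgebra.mem_centralizer_iff ℚ).mp hφψ _ rfl) v
  refine LieSubalgebra.lieSpan_le.mpr ?_ hφ
  rintro f ⟨x, hx, Λ, t, rfl | rfl | rfl⟩ <;>
    refine (Subalgebra.mem_centralizer_iff ℚ).mpr ?_ <;> rintro _ rfl
  · exact hψL x hx
  · exact hψθ
  · exact t.commute_f_of_commute ((Set.finite_Iic _).image _) hspec ψ hψθ (hψL x hx)

/-- Let `V = H*(X, ℚ)` be the cohomology algebra of a compact
hyper-Kähler manifold `X` of complex dimension `2m`, with grading `gr k = H^k(X, ℚ)` and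
degree operator `θ` acting on `H^k` by `k − 2m`.  Let `G` act on `V` by algebra
automorphisms preserving the grading and acting trivially on `H² = gr 2`.  Then the action
of `G` commutes with every element of the Looijenga–Lunts–Verbitsky Lie algebra, i.e. with
every element of the Lie subalgebra of `End_ℚ(V)` generated by the `sl₂`-triples
`(L_x, θ, Λ_x)` attached to classes `x ∈ H²(X, ℚ)` with the Lefschetz property. -/
theorem group_action_commutes_with_LLV_lieAlgebra
    (V : Type u) [Ring V] [Algebra ℚ V]
    (m : ℕ) (gr : ℕ → Submodule ℚ V)
    -- `V` is the graded algebra `H*(X, ℚ)` of a `2m`-dimensional compact hyper-Kähler `X`: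
    (hgr_top : ⨆ k, gr k = ⊤)
    (hgr_mul : ∀ j k : ℕ, ∀ a ∈ gr j, ∀ b ∈ gr k, a * b ∈ gr (j + k))
    (hgr_bounded : ∀ k : ℕ, 4 * m < k → gr k = ⊥)
    -- the degree operator `θ`:
    (θ : Module.End ℚ V)
    (hθ : ∀ (k : ℕ), ∀ v ∈ gr k, θ v = ((k : ℚ) - 2 * m) • v)
    -- the group action by graded algebra automorphisms:
    (G : Type u) [Group G] (ρ : G →* (V ≃ₐ[ℚ] V))
    (hgraded : ∀ (g : G) (k : ℕ), ∀ v ∈ gr k, ρ g v ∈ gr k)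
    -- the action is trivial on `H²(X, ℚ)`:
    (htriv : ∀ (g : G), ∀ v ∈ gr 2, ρ g v = v) :
    ∀ (g : G),
      ∀ φ ∈ LieSubalgebra.lieSpan ℚ (Module.End ℚ V)
        {f : Module.End ℚ V |
          ∃ x ∈ gr 2, ∃ Λ : Module.End ℚ V,
            IsSl2Triple θ (LinearMap.mulLeft ℚ x) Λ ∧
              (f = LinearMap.mulLeft ℚ x ∨ f = θ ∨ f = Λ)},
      ∀ v : V, ρ g (φ v) = φ (ρ g v) :=
  group_action_commutes_with_LLV_lieAlgebra_general V m gr hgr_top hgr_bounded θ hθ G ρ hgraded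
    htriv
end

section
/- Let C ⊆ D be Tannakian subcategories of the category of polarizable rational Hodge structures, both containing some Hodge structure of odd weight. Let q: MT(D) → MT(C) and q^ev: MT(D^ev) → MT(C^ev) be the surjections of (pro-algebraic) Mumford–Tate groups induced by the inclusions, and let π: MT(D) → MT(D^ev) be the natural surjection, whose kernel is the order-2 central subgroup generated by ι = w(−1). Then π restricts to an isomorphism ker(q) ≅ ker(q^ev), and π⁻¹(ker(q^ev)) = ⟨ι⟩ × ker(q). -/
/-!
Statement 14: Let C ⊆ D be Tannakian subcategories of polarizable rational Hodge structures,
both containing an odd-weight object.  With q : MT(D) → MT(C), q^ev : MT(D^ev) → MT(C^ev)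
the induced surjections and π : MT(D) → MT(D^ev) the natural surjection with kernel the
order-2 central subgroup ⟨ι⟩, ι = w(−1): π restricts to an isomorphism
ker(q) ≅ ker(q^ev), and π⁻¹(ker q^ev) = ⟨ι⟩ × ker(q).

We formalize the Tannaka groups as abstract groups: `GD = MT(D)`, `GC = MT(C)`,
`GDe = MT(D^ev)`, `GCe = MT(C^ev)`, with the canonical surjections between them.
-/

/-- Let `q : MT(D) → MT(C)`, `q^ev : MT(D^ev) → MT(C^ev)` be the
surjections induced by the inclusion `C ⊆ D` of Tannakian subcategories of polarizable
rational Hodge structures, both containing an odd-weight object, let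
`π : MT(D) → MT(D^ev)` and `π_C : MT(C) → MT(C^ev)` be the natural surjections, whose
kernels are the order-2 central subgroups generated by `ι = w(−1)` resp. `q(ι)`, and
suppose the obvious square commutes.  Then `π` maps `ker q` isomorphically onto
`ker q^ev` (i.e. `π(ker q) = ker q^ev` and `π` is injective on `ker q`), and
`π⁻¹(ker q^ev) = ⟨ι⟩ × ker q` (an internal direct product: the two subgroups intersect
trivially, and `ι` is central). -/
theorem ker_eq_ker_even_and_preimage_eq_iota_mul_ker
    {GD GC GDe GCe : Type*} [Group GD] [Group GC] [Group GDe] [Group GCe]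
    -- the surjections induced by the inclusion `C ⊆ D`
    (q : GD →* GC) (hq : Function.Surjective q)
    (qe : GDe →* GCe) (hqe : Function.Surjective qe)
    -- the natural surjections `MT(D) → MT(D^ev)` and `MT(C) → MT(C^ev)`
    (π : GD →* GDe) (hπ : Function.Surjective π)
    (πC : GC →* GCe) (hπC : Function.Surjective πC)
    -- compatibility: the square commutes
    (hsquare : πC.comp q = qe.comp π)
    -- `ι = w(−1)` is central of order 2 and generates `ker π`
    (ι : GD) (hι_mem : ι ∈ Subgroup.center GD) (hι_order : orderOf ι = 2)
    (hkerπ : π.ker = Subgroup.zpowers ι)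
    -- `D` and `C` both contain an odd-weight object: `ker π_C` is generated by
    -- `q(ι)`, which also has order 2
    (hkerπC : πC.ker = Subgroup.zpowers (q ι)) (hqι_order : orderOf (q ι) = 2) :
    -- `π` restricts to an isomorphism `ker q ≅ ker q^ev` …
    Subgroup.map π q.ker = qe.ker ∧ q.ker ⊓ π.ker = ⊥ ∧
    -- … and `π⁻¹(ker q^ev) = ⟨ι⟩ × ker q`
    Subgroup.comap π qe.ker = Subgroup.zpowers ι ⊔ q.ker ∧
    Subgroup.zpowers ι ⊓ q.ker = ⊥ := by
  have hsq : ∀ x : GD, πC (q x) = qe (π x) := fun x =>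
    DFunLike.congr_fun hsquare x
  -- trivial intersection of ⟨ι⟩ and ker q
  have hint : Subgroup.zpowers ι ⊓ q.ker = ⊥ := by
    rw [Subgroup.eq_bot_iff_forall]
    rintro x ⟨hx1, hx2⟩
    obtain ⟨n, rfl⟩ := Subgroup.mem_zpowers_iff.mp hx1
    have hq1 : (q ι) ^ n = 1 := by
      rw [← map_zpow]; exact hx2
    have h2n : (2 : ℤ) ∣ n := by
      have := orderOf_dvd_iff_zpow_eq_one.mpr hq1
      rwa [hqι_order] at this
    obtain ⟨m, rfl⟩ := h2n
    have h2 : (ι ^ (2 : ℤ)) = 1 := by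
      have := pow_orderOf_eq_one ι
      rw [hι_order] at this
      exact_mod_cast this
    rw [zpow_mul, h2, one_zpow]
  -- key claim: elements of comap π qe.ker decompose
  have hdecomp : ∀ x : GD, qe (π x) = 1 → ∃ n : ℤ, q (x * ι ^ (-n)) = 1 ∧
      x = ι ^ n * (x * ι ^ (-n)) := by
    intro x hx
    have : q x ∈ πC.ker := by
      rw [MonoidHom.mem_ker, hsq, hx]
    rw [hkerπC] at this
    obtain ⟨n, hn⟩ := Subgroup.mem_zpowers_iff.mp this
    refine ⟨n, ?_, ?_⟩
    · rw [map_mul, map_zpow, ← hn, ← zpow_add, add_neg_cancel, zpow_zero]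
    · have hc : ι ^ n * x = x * ι ^ n :=
        (Subgroup.mem_center_iff.mp (Subgroup.zpow_mem (Subgroup.center GD) hι_mem n) x).symm
      rw [← mul_assoc, hc, mul_assoc, ← zpow_add, add_neg_cancel, zpow_zero, mul_one]
  refine ⟨?_, ?_, ?_, hint⟩
  · -- map π q.ker = qe.ker
    apply le_antisymm
    · rintro y ⟨x, hx, rfl⟩
      rw [MonoidHom.mem_ker, ← hsq, hx, map_one]
    · intro y hy
      obtain ⟨x, rfl⟩ := hπ y
      obtain ⟨n, hq0, hxe⟩ := hdecomp x hy
      refine ⟨x * ι ^ (-n), hq0, ?_⟩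
      rw [map_mul, map_zpow]
      have : π ι = 1 := by
        have : ι ∈ π.ker := hkerπ ▸ Subgroup.mem_zpowers ι
        exact this
      rw [this, one_zpow, mul_one]
  · rw [hkerπ, inf_comm]; exact hint
  · -- comap π qe.ker = ⟨ι⟩ ⊔ ker q
    apply le_antisymm
    · intro x hx
      obtain ⟨n, hq0, hxe⟩ := hdecomp x (by exact hx)
      rw [hxe]
      exact Subgroup.mul_mem _
        (Subgroup.mem_sup_left (Subgroup.zpow_mem _ (Subgroup.mem_zpowers ι) n))
        (Subgroup.mem_sup_right hq0)
    · rw [sup_le_iff]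
      constructor
      · rw [← hkerπ]
        intro x hx
        simp [Subgroup.mem_comap, MonoidHom.mem_ker.mp hx]
      · intro x hx
        simp [Subgroup.mem_comap, MonoidHom.mem_ker, ← hsq, MonoidHom.mem_ker.mp hx]
end
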